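/- Let γ = 7/5, s = (√61 − 4)/5, ρ* = (17 + 2√61)/9, p* = (109 + 14√61)/35, and define the piecewise-constant function on ℝ × [0, ∞) by (ρ, u, p)(x, t) = (1, 2, 5/7) if x < −st, (ρ*, 0, p*) if −st ≤ x ≤ st, and (1, −2, 5/7) if x > st. Then U = (ρ, ρu, ρE), with E = p/(ρ(γ−1)) + u²/2, is a weak solution of the one-dimensional Euler equations with initial data U(x, 0⁺) = U_L for x < 0 and U_R for x > 0: for every smooth compactly supported test function φ : ℝ × ℝ → ℝ and each component j ∈ {1, 2, 3}, ∫₀^∞ ∫_ℝ ( U_j(x,t) ∂_t φ(x,t) + F_j(U(x,t)) ∂_x φ(x,t) ) dx dt + ∫_ℝ U_j(x, 0) φ(x, 0) dx = 0, where F(U) = (ρu, ρu² + p, u(ρE + p)). -/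

import Mathlib

open MeasureTheory

namespace EulerAux

open Set

/-- Shear homeomorphism `(y, t) ↦ (y + c t, t)`. -/
def shear (c : ℝ) : ℝ × ℝ ≃ₜ ℝ × ℝ where
  toFun p := (p.1 + c * p.2, p.2)
  invFun p := (p.1 - c * p.2, p.2)
  left_inv p := by simp
  right_inv p := by simp
  continuous_toFun := by fun_prop
  continuous_invFun := by fun_prop

variable {φ : ℝ × ℝ → ℝ}

lemma slice1_compact (h : HasCompactSupport φ) (t : ℝ) :
    HasCompactSupport (fun y : ℝ => φ (y, t)) := by
  apply HasCompactSupport.intro (h.image continuous_fst)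
  intro y hy
  by_contra h0
  exact hy ⟨(y, t), subset_tsupport _ h0, rfl⟩

lemma slice2_compact (h : HasCompactSupport φ) (y : ℝ) :
    HasCompactSupport (fun t : ℝ => φ (y, t)) := by
  apply HasCompactSupport.intro (h.image continuous_snd)
  intro t ht
  by_contra h0
  exact ht ⟨(y, t), subset_tsupport _ h0, rfl⟩

lemma slice1_contDiff (h : ContDiff ℝ (⊤ : ℕ∞) φ) (t : ℝ) :
    ContDiff ℝ 1 (fun y : ℝ => φ (y, t)) :=
  (h.of_le (by simp)).comp (contDiff_id.prodMk contDiff_const)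

lemma slice2_contDiff (h : ContDiff ℝ (⊤ : ℕ∞) φ) (y : ℝ) :
    ContDiff ℝ 1 (fun t : ℝ => φ (y, t)) :=
  (h.of_le (by simp)).comp (contDiff_const.prodMk contDiff_id)

lemma hasDerivAt_slice1 (h : ContDiff ℝ (⊤ : ℕ∞) φ) (y t : ℝ) :
    HasDerivAt (fun y' : ℝ => φ (y', t)) (fderiv ℝ φ (y, t) (1, 0)) y := by
  have hd : HasFDerivAt φ (fderiv ℝ φ (y, t)) (y, t) :=
    (h.differentiable (by simp) (y, t)).hasFDerivAt
  have hc : HasDerivAt (fun y' : ℝ => ((y', t) : ℝ × ℝ)) (1, 0) y :=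
    (hasDerivAt_id y).prodMk (hasDerivAt_const y t)
  exact hd.comp_hasDerivAt y hc

lemma hasDerivAt_slice2 (h : ContDiff ℝ (⊤ : ℕ∞) φ) (y t : ℝ) :
    HasDerivAt (fun t' : ℝ => φ (y, t')) (fderiv ℝ φ (y, t) (0, 1)) t := by
  have hd : HasFDerivAt φ (fderiv ℝ φ (y, t)) (y, t) :=
    (h.differentiable (by simp) (y, t)).hasFDerivAt
  have hc : HasDerivAt (fun t' : ℝ => ((y, t') : ℝ × ℝ)) ((0 : ℝ), (1 : ℝ)) t :=
    (hasDerivAt_const t y).prodMk (hasDerivAt_id t)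
  exact hd.comp_hasDerivAt t hc

/-- continuity of the directional derivative. -/
lemma contDeriv (h : ContDiff ℝ (⊤ : ℕ∞) φ) (v : ℝ × ℝ) :
    Continuous (fun p => fderiv ℝ φ p v) := by
  have : Continuous (fderiv ℝ φ) := (h.fderiv_right (m := (⊤ : ℕ∞)) le_rfl).continuous
  exact (ContinuousLinearMap.apply ℝ ℝ v).continuous.comp this

lemma compactDeriv (h : HasCompactSupport φ) (hs : ContDiff ℝ (⊤ : ℕ∞) φ) (v : ℝ × ℝ) :
    HasCompactSupport (fun p => fderiv ℝ φ p v) := by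
  have := h.fderiv (𝕜 := ℝ)
  exact this.comp_left (g := fun L : ℝ × ℝ →L[ℝ] ℝ => L v) rfl

/-- FTC on `Iio b`: integral of the x-derivative of a slice. -/
lemma ftc_Iio (h : ContDiff ℝ (⊤ : ℕ∞) φ) (hc : HasCompactSupport φ) (t b : ℝ) :
    ∫ y in Iio b, fderiv ℝ φ (y, t) (1, 0) = φ (b, t) := by
  have key : ∫ y in Iic b, deriv (fun y' : ℝ => φ (y', t)) y = φ (b, t) :=
    HasCompactSupport.integral_Iic_deriv_eq (slice1_contDiff h t) (slice1_compact hc t) b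
  rw [← integral_Iic_eq_integral_Iio]
  rw [← key]
  apply setIntegral_congr_fun measurableSet_Iic
  intro y _
  exact ((hasDerivAt_slice1 h y t).deriv).symm

/-- FTC on `Ioi 0` in time. -/
lemma ftc_Ioi (h : ContDiff ℝ (⊤ : ℕ∞) φ) (hc : HasCompactSupport φ) (y : ℝ) :
    ∫ t in Ioi (0 : ℝ), fderiv ℝ φ (y, t) (0, 1) = -φ (y, 0) := by
  have key : ∫ t in Ioi (0 : ℝ), deriv (fun t' : ℝ => φ (y, t')) t = -φ (y, 0) :=
    HasCompactSupport.integral_Ioi_deriv_eq (slice2_contDiff h y) (slice2_compact hc y) 0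
  rw [← key]
  apply setIntegral_congr_fun measurableSet_Ioi
  intro t _
  exact ((hasDerivAt_slice2 h y t).deriv).symm

/-- integral over all of ℝ of the x-derivative vanishes. -/
lemma ftc_univ (h : ContDiff ℝ (⊤ : ℕ∞) φ) (hc : HasCompactSupport φ) (t : ℝ) :
    ∫ y : ℝ, fderiv ℝ φ (y, t) (1, 0) = 0 := by
  have hcont : Continuous (fun y : ℝ => fderiv ℝ φ (y, t) (1, 0)) :=
    (contDeriv h (1, 0)).comp (continuous_id.prodMk continuous_const)
  have hcs : HasCompactSupport (fun y : ℝ => fderiv ℝ φ (y, t) (1, 0)) :=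
    slice1_compact (compactDeriv hc h (1, 0)) t
  have hint : Integrable (fun y : ℝ => fderiv ℝ φ (y, t) (1, 0)) volume :=
    hcont.integrable_of_hasCompactSupport hcs
  have h1 : ∫ y in Iic (0 : ℝ), fderiv ℝ φ (y, t) (1, 0) = φ (0, t) := by
    rw [integral_Iic_eq_integral_Iio]; exact ftc_Iio h hc t 0
  have h2 : ∫ y in Ioi (0 : ℝ), fderiv ℝ φ (y, t) (1, 0) = -φ (0, t) := by
    have key : ∫ y in Ioi (0 : ℝ), deriv (fun y' : ℝ => φ (y', t)) y = -φ (0, t) :=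
      HasCompactSupport.integral_Ioi_deriv_eq (slice1_contDiff h t) (slice1_compact hc t) 0
    rw [← key]
    apply setIntegral_congr_fun measurableSet_Ioi
    intro y _
    exact ((hasDerivAt_slice1 h y t).deriv).symm
  rw [← intervalIntegral.integral_Iic_add_Ioi hint.integrableOn hint.integrableOn, h1, h2]
  ring

/-- Shift substitution on a half line. -/
lemma shift_Iio (g : ℝ → ℝ) (c : ℝ) :
    ∫ x in Iio c, g x = ∫ y in Iio (0 : ℝ), g (y + c) := by
  have hmp : MeasurePreserving (fun x : ℝ => x + c) volume volume :=
    measurePreserving_add_right (volume : Measure ℝ) c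
  have hemb : MeasurableEmbedding (fun x : ℝ => x + c) :=
    (MeasurableEquiv.addRight c).measurableEmbedding
  have := hmp.setIntegral_preimage_emb hemb g (Iio c)
  rw [← this]
  congr 1
  ext x
  simp

/-- Fubini swap for continuous compactly supported integrands over product of sets.
Here `f`'s arguments are `(y, t)` and we integrate `t` first on the LHS. -/
lemma fubini_swap (f : ℝ × ℝ → ℝ) (hf : Continuous f) (hfc : HasCompactSupport f)
    (s u : Set ℝ) (hs : MeasurableSet s) (hu : MeasurableSet u) :
    ∫ t in s, ∫ y in u, f (y, t) = ∫ y in u, ∫ t in s, f (y, t) := by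
  have hswap : Continuous (fun p : ℝ × ℝ => f (p.2, p.1)) :=
    hf.comp continuous_swap
  have hswapc : HasCompactSupport (fun p : ℝ × ℝ => f (p.2, p.1)) :=
    hfc.comp_homeomorph (Homeomorph.prodComm ℝ ℝ)
  have hInt : Integrable (fun p : ℝ × ℝ => f (p.2, p.1))
      ((volume.restrict s).prod (volume.restrict u)) := by
    rw [Measure.prod_restrict]
    exact (hswap.integrable_of_hasCompactSupport hswapc).restrict
  exact integral_integral_swap hInt

/-- Integrability of the inner-integral function. -/
lemma inner_integrable (f : ℝ × ℝ → ℝ) (hf : Continuous f) (hfc : HasCompactSupport f)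
    (s u : Set ℝ) :
    Integrable (fun t => ∫ y in u, f (y, t)) (volume.restrict s) := by
  have hswap : Continuous (fun p : ℝ × ℝ => f (p.2, p.1)) :=
    hf.comp continuous_swap
  have hswapc : HasCompactSupport (fun p : ℝ × ℝ => f (p.2, p.1)) :=
    hfc.comp_homeomorph (Homeomorph.prodComm ℝ ℝ)
  have hInt : Integrable (fun p : ℝ × ℝ => f (p.2, p.1))
      ((volume.restrict s).prod (volume.restrict u)) := by
    rw [Measure.prod_restrict]
    exact (hswap.integrable_of_hasCompactSupport hswapc).restrict
  exact hInt.integral_prod_left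

/-- The sheared function. -/
lemma shear_contDiff (h : ContDiff ℝ (⊤ : ℕ∞) φ) (c : ℝ) :
    ContDiff ℝ (⊤ : ℕ∞) (fun p : ℝ × ℝ => φ (p.1 + c * p.2, p.2)) :=
  h.comp ((contDiff_fst.add (contDiff_const.mul contDiff_snd)).prodMk contDiff_snd)

lemma shear_compact (hc : HasCompactSupport φ) (c : ℝ) :
    HasCompactSupport (fun p : ℝ × ℝ => φ (p.1 + c * p.2, p.2)) :=
  hc.comp_homeomorph (shear c)

lemma shear_fderiv1 (h : ContDiff ℝ (⊤ : ℕ∞) φ) (c : ℝ) (y t : ℝ) :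
    fderiv ℝ (fun p : ℝ × ℝ => φ (p.1 + c * p.2, p.2)) (y, t) (1, 0)
      = fderiv ℝ φ (y + c * t, t) (1, 0) := by
  have h1 : HasDerivAt (fun y' : ℝ => φ (y' + c * t, t))
      (fderiv ℝ φ (y + c * t, t) (1, 0)) y := by
    have := hasDerivAt_slice1 h (y + c * t) t
    have hshift : HasDerivAt (fun y' : ℝ => y' + c * t) 1 y :=
      (hasDerivAt_id y).add_const _
    have := this.comp y hshift; rw [mul_one] at this; exact this
  have h2 := hasDerivAt_slice1 (shear_contDiff h c) y t
  have := h2.deriv.symm.trans h1.deriv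
  exact this

lemma shear_fderiv2 (h : ContDiff ℝ (⊤ : ℕ∞) φ) (c : ℝ) (y t : ℝ) :
    fderiv ℝ (fun p : ℝ × ℝ => φ (p.1 + c * p.2, p.2)) (y, t) (0, 1)
      = c * fderiv ℝ φ (y + c * t, t) (1, 0) + fderiv ℝ φ (y + c * t, t) (0, 1) := by
  have hd : HasFDerivAt φ (fderiv ℝ φ (y + c * t, t)) (y + c * t, t) :=
    (h.differentiable (by simp) _).hasFDerivAt
  have hcurve : HasDerivAt (fun t' : ℝ => ((y + c * t', t') : ℝ × ℝ)) ((c : ℝ), (1 : ℝ)) t := by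
    have := ((hasDerivAt_const t y).add ((hasDerivAt_id t).const_mul c)).prodMk (hasDerivAt_id t)
    simpa using this
  have h1 : HasDerivAt (fun t' : ℝ => φ (y + c * t', t'))
      (fderiv ℝ φ (y + c * t, t) (c, 1)) t := by
    have := hd.comp_hasDerivAt_of_eq t hcurve rfl
    exact this
  have h2 := hasDerivAt_slice2 (shear_contDiff h c) y t
  have heq := h2.deriv.symm.trans h1.deriv
  rw [heq]
  have : ((c : ℝ), (1 : ℝ)) = c • ((1 : ℝ), (0 : ℝ)) + ((0 : ℝ), (1 : ℝ)) := by
    simp [Prod.ext_iff]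
  rw [this, map_add, ContinuousLinearMap.map_smul]
  simp

/-- Substitution of the inner integral over a wedge cross-section. -/
lemma subst_inner (h : ContDiff ℝ (⊤ : ℕ∞) φ) (U F c t : ℝ) :
    (∫ x in Iio (c * t), (U * fderiv ℝ φ (x, t) (0, 1) + F * fderiv ℝ φ (x, t) (1, 0)))
      = ∫ y in Iio (0 : ℝ),
          (U * fderiv ℝ (fun p : ℝ × ℝ => φ (p.1 + c * p.2, p.2)) (y, t) (0, 1)
            + (F - c * U) * fderiv ℝ (fun p : ℝ × ℝ => φ (p.1 + c * p.2, p.2)) (y, t) (1, 0)) := by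
  rw [shift_Iio (fun x => U * fderiv ℝ φ (x, t) (0, 1) + F * fderiv ℝ φ (x, t) (1, 0)) (c * t)]
  apply setIntegral_congr_fun measurableSet_Iio
  intro y _
  show U * fderiv ℝ φ (y + c * t, t) (0, 1) + F * fderiv ℝ φ (y + c * t, t) (1, 0)
      = U * fderiv ℝ (fun p : ℝ × ℝ => φ (p.1 + c * p.2, p.2)) (y, t) (0, 1)
        + (F - c * U) * fderiv ℝ (fun p : ℝ × ℝ => φ (p.1 + c * p.2, p.2)) (y, t) (1, 0)
  rw [shear_fderiv1 h c y t, shear_fderiv2 h c y t]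
  ring

/-- Integral of a constant-state integrand over a wedge `{x < c t, t > 0}`. -/
lemma wedge (h : ContDiff ℝ (⊤ : ℕ∞) φ) (hc : HasCompactSupport φ) (U F c : ℝ) :
    (∫ t in Ioi (0 : ℝ), ∫ x in Iio (c * t),
        (U * fderiv ℝ φ (x, t) (0, 1) + F * fderiv ℝ φ (x, t) (1, 0)))
      = -(U * ∫ x in Iio (0 : ℝ), φ (x, 0))
        + (F - c * U) * ∫ t in Ioi (0 : ℝ), φ (c * t, t) := by
  set ψ : ℝ × ℝ → ℝ := fun p => φ (p.1 + c * p.2, p.2) with hψdef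
  have hψ : ContDiff ℝ (⊤ : ℕ∞) ψ := shear_contDiff h c
  have hψc : HasCompactSupport ψ := shear_compact hc c
  have step1 : ∀ t : ℝ, (∫ x in Iio (c * t),
        (U * fderiv ℝ φ (x, t) (0, 1) + F * fderiv ℝ φ (x, t) (1, 0)))
      = ∫ y in Iio (0 : ℝ),
          (U * fderiv ℝ ψ (y, t) (0, 1) + (F - c * U) * fderiv ℝ ψ (y, t) (1, 0)) :=
    fun t => subst_inner h U F c t
  rw [setIntegral_congr_fun measurableSet_Ioi (fun t _ => step1 t)]
  have hcψ1 : Continuous (fun p : ℝ × ℝ => fderiv ℝ ψ p (1, 0)) := contDeriv hψ _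
  have hcψ2 : Continuous (fun p : ℝ × ℝ => fderiv ℝ ψ p (0, 1)) := contDeriv hψ _
  have hsψ1 : HasCompactSupport (fun p : ℝ × ℝ => fderiv ℝ ψ p (1, 0)) := compactDeriv hψc hψ _
  have hsψ2 : HasCompactSupport (fun p : ℝ × ℝ => fderiv ℝ ψ p (0, 1)) := compactDeriv hψc hψ _
  have hinner : ∀ t : ℝ, (∫ y in Iio (0 : ℝ),
        (U * fderiv ℝ ψ (y, t) (0, 1) + (F - c * U) * fderiv ℝ ψ (y, t) (1, 0)))
      = U * (∫ y in Iio (0 : ℝ), fderiv ℝ ψ (y, t) (0, 1)) + (F - c * U) * ψ (0, t) := by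
    intro t
    have i2 : IntegrableOn (fun y : ℝ => fderiv ℝ ψ (y, t) (0, 1)) (Iio 0) := by
      refine (Continuous.integrable_of_hasCompactSupport ?_ ?_).integrableOn
      · exact hcψ2.comp (continuous_id.prodMk continuous_const)
      · exact slice1_compact hsψ2 t
    have i1 : IntegrableOn (fun y : ℝ => fderiv ℝ ψ (y, t) (1, 0)) (Iio 0) := by
      refine (Continuous.integrable_of_hasCompactSupport ?_ ?_).integrableOn
      · exact hcψ1.comp (continuous_id.prodMk continuous_const)
      · exact slice1_compact hsψ1 t
    rw [integral_add (i2.const_mul U) (i1.const_mul (F - c * U)),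
      integral_const_mul _ _, integral_const_mul _ _, ftc_Iio hψ hψc t 0]
  rw [setIntegral_congr_fun measurableSet_Ioi (fun t _ => hinner t)]
  have o1 : Integrable (fun t => U * (∫ y in Iio (0 : ℝ), fderiv ℝ ψ (y, t) (0, 1)))
      (volume.restrict (Ioi 0)) := by
    exact (inner_integrable _ hcψ2 hsψ2 (Ioi 0) (Iio 0)).const_mul U
  have o2 : Integrable (fun t => (F - c * U) * ψ (0, t)) (volume.restrict (Ioi 0)) := by
    refine (Integrable.restrict ?_).const_mul _
    exact (hψ.continuous.comp (continuous_const.prodMk continuous_id)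
      ).integrable_of_hasCompactSupport (slice2_compact hψc 0)
  rw [integral_add o1 o2, integral_const_mul _ _, integral_const_mul _ _]
  have hswap := fubini_swap _ hcψ2 hsψ2 (Ioi 0) (Iio 0) measurableSet_Ioi measurableSet_Iio
  rw [hswap]
  have : (∫ y in Iio (0 : ℝ), ∫ t in Ioi (0 : ℝ), fderiv ℝ ψ (y, t) (0, 1))
      = ∫ y in Iio (0 : ℝ), (-φ (y, 0)) := by
    apply setIntegral_congr_fun measurableSet_Iio
    intro y _
    show (∫ t in Ioi (0 : ℝ), fderiv ℝ ψ (y, t) (0, 1)) = -φ (y, 0)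
    rw [ftc_Ioi hψ hψc y]
    simp [hψdef]
  rw [this, integral_neg]
  have : ∀ t : ℝ, ψ (0, t) = φ (c * t, t) := by intro t; simp [hψdef]
  simp only [this]
  ring

/-- Integral of a constant-state integrand over the full half plane `t > 0`. -/
lemma plane (h : ContDiff ℝ (⊤ : ℕ∞) φ) (hc : HasCompactSupport φ) (U F : ℝ) :
    (∫ t in Ioi (0 : ℝ), ∫ x : ℝ,
        (U * fderiv ℝ φ (x, t) (0, 1) + F * fderiv ℝ φ (x, t) (1, 0)))
      = -(U * ∫ x : ℝ, φ (x, 0)) := by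
  have hc1 : Continuous (fun p : ℝ × ℝ => fderiv ℝ φ p (1, 0)) := contDeriv h _
  have hc2 : Continuous (fun p : ℝ × ℝ => fderiv ℝ φ p (0, 1)) := contDeriv h _
  have hs1 : HasCompactSupport (fun p : ℝ × ℝ => fderiv ℝ φ p (1, 0)) := compactDeriv hc h _
  have hs2 : HasCompactSupport (fun p : ℝ × ℝ => fderiv ℝ φ p (0, 1)) := compactDeriv hc h _
  have hinner : ∀ t : ℝ, (∫ x : ℝ, (U * fderiv ℝ φ (x, t) (0, 1) + F * fderiv ℝ φ (x, t) (1, 0)))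
      = U * (∫ x : ℝ, fderiv ℝ φ (x, t) (0, 1)) := by
    intro t
    have i2 : Integrable (fun x : ℝ => fderiv ℝ φ (x, t) (0, 1)) volume := by
      refine Continuous.integrable_of_hasCompactSupport ?_ ?_
      · exact hc2.comp (continuous_id.prodMk continuous_const)
      · exact slice1_compact hs2 t
    have i1 : Integrable (fun x : ℝ => fderiv ℝ φ (x, t) (1, 0)) volume := by
      refine Continuous.integrable_of_hasCompactSupport ?_ ?_
      · exact hc1.comp (continuous_id.prodMk continuous_const)
      · exact slice1_compact hs1 t
    rw [integral_add (i2.const_mul U) (i1.const_mul F),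
      integral_const_mul _ _, integral_const_mul _ _, ftc_univ h hc t]
    ring
  rw [setIntegral_congr_fun measurableSet_Ioi (fun t _ => hinner t)]
  rw [integral_const_mul _ _]
  have hswap : (∫ t in Ioi (0:ℝ), ∫ x : ℝ, fderiv ℝ φ (x, t) (0, 1))
      = ∫ x : ℝ, ∫ t in Ioi (0:ℝ), fderiv ℝ φ (x, t) (0, 1) := by
    have := fubini_swap _ hc2 hs2 (Ioi 0) Set.univ measurableSet_Ioi MeasurableSet.univ
    simpa [Measure.restrict_univ] using this
  rw [hswap]
  have : (∫ x : ℝ, ∫ t in Ioi (0:ℝ), fderiv ℝ φ (x, t) (0, 1)) = ∫ x : ℝ, (-φ (x, 0)) := by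
    congr 1
    ext x
    exact ftc_Ioi h hc x
  rw [this, integral_neg]
  ring

/-- Integrability in `t` of the wedge cross-section integral. -/
lemma wedgeFun_integrable (h : ContDiff ℝ (⊤ : ℕ∞) φ) (hc : HasCompactSupport φ) (U F c : ℝ) :
    Integrable (fun t => ∫ x in Iio (c * t),
      (U * fderiv ℝ φ (x, t) (0, 1) + F * fderiv ℝ φ (x, t) (1, 0)))
      (volume.restrict (Ioi 0)) := by
  set ψ : ℝ × ℝ → ℝ := fun p => φ (p.1 + c * p.2, p.2) with hψdef
  have hψ : ContDiff ℝ (⊤ : ℕ∞) ψ := shear_contDiff h c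
  have hψc : HasCompactSupport ψ := shear_compact hc c
  have hcont : Continuous (fun p : ℝ × ℝ =>
      U * fderiv ℝ ψ p (0, 1) + (F - c * U) * fderiv ℝ ψ p (1, 0)) :=
    (continuous_const.mul (contDeriv hψ _)).add (continuous_const.mul (contDeriv hψ _))
  have hcs : HasCompactSupport (fun p : ℝ × ℝ =>
      U * fderiv ℝ ψ p (0, 1) + (F - c * U) * fderiv ℝ ψ p (1, 0)) := by
    have h2 := (compactDeriv hψc hψ ((0 : ℝ), (1 : ℝ))).comp_left
      (g := fun r : ℝ => U * r) (mul_zero U)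
    have h1 := (compactDeriv hψc hψ ((1 : ℝ), (0 : ℝ))).comp_left
      (g := fun r : ℝ => (F - c * U) * r) (mul_zero _)
    exact h2.add h1
  have base := inner_integrable _ hcont hcs (Ioi 0) (Iio 0)
  exact base.congr (Filter.Eventually.of_forall fun t => (subst_inner h U F c t).symm)

/-- Integrability in `t` of the full-line cross-section integral. -/
lemma planeFun_integrable (h : ContDiff ℝ (⊤ : ℕ∞) φ) (hc : HasCompactSupport φ) (U F : ℝ) :
    Integrable (fun t => ∫ x : ℝ,
      (U * fderiv ℝ φ (x, t) (0, 1) + F * fderiv ℝ φ (x, t) (1, 0)))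
      (volume.restrict (Ioi 0)) := by
  have hcont : Continuous (fun p : ℝ × ℝ =>
      U * fderiv ℝ φ p (0, 1) + F * fderiv ℝ φ p (1, 0)) :=
    (continuous_const.mul (contDeriv h _)).add (continuous_const.mul (contDeriv h _))
  have hcs : HasCompactSupport (fun p : ℝ × ℝ =>
      U * fderiv ℝ φ p (0, 1) + F * fderiv ℝ φ p (1, 0)) := by
    have h2 := (compactDeriv hc h ((0 : ℝ), (1 : ℝ))).comp_left
      (g := fun r : ℝ => U * r) (mul_zero U)
    have h1 := (compactDeriv hc h ((1 : ℝ), (0 : ℝ))).comp_left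
      (g := fun r : ℝ => F * r) (mul_zero F)
    exact h2.add h1
  have base := inner_integrable _ hcont hcs (Ioi 0) Set.univ
  refine base.congr (Filter.Eventually.of_forall fun t => ?_)
  simp [Measure.restrict_univ]

end EulerAux

/-- Ratio of specific heats. -/
noncomputable def eulerGamma : ℝ := 7 / 5

/-- Shock speed of the impact problem. -/
noncomputable def shockSpeed : ℝ := (Real.sqrt 61 - 4) / 5

/-- Intermediate (post-shock) density. -/
noncomputable def rhoStar : ℝ := (17 + 2 * Real.sqrt 61) / 9

/-- Intermediate (post-shock) pressure. -/
noncomputable def pStar : ℝ := (109 + 14 * Real.sqrt 61) / 35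

/-- Total energy per unit mass of a primitive state `(ρ, u, p)` with the
ideal-gas equation of state: `E = p/(ρ(γ−1)) + u²/2`. -/
noncomputable def totalEnergy (w : ℝ × ℝ × ℝ) : ℝ :=
  w.2.2 / (w.1 * (eulerGamma - 1)) + w.2.1 ^ 2 / 2

/-- Conserved variables `U = (ρ, ρu, ρE)` of a primitive state `(ρ, u, p)`. -/
noncomputable def conserved (w : ℝ × ℝ × ℝ) : Fin 3 → ℝ :=
  ![w.1, w.1 * w.2.1, w.1 * totalEnergy w]

/-- Euler flux `F(U) = (ρu, ρu² + p, u(ρE + p))` of a primitive state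
`(ρ, u, p)`. -/
noncomputable def eulerFlux (w : ℝ × ℝ × ℝ) : Fin 3 → ℝ :=
  ![w.1 * w.2.1, w.1 * w.2.1 ^ 2 + w.2.2,
    w.2.1 * (w.1 * totalEnergy w + w.2.2)]

/-- The piecewise-constant two-shock solution of the impact problem in
primitive variables: left state for `x < −st`, intermediate state for
`−st ≤ x ≤ st`, right state for `x > st`. -/
noncomputable def impactSolution (x t : ℝ) : ℝ × ℝ × ℝ :=
  if x < -(shockSpeed * t) then (1, 2, 5 / 7)
  else if x ≤ shockSpeed * t then (rhoStar, 0, pStar)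
  else (1, -2, 5 / 7)

/-- Initial data in primitive variables: `(1, 2, 5/7)` for `x < 0` and
`(1, −2, 5/7)` for `x > 0`. -/
noncomputable def impactInitial (x : ℝ) : ℝ × ℝ × ℝ :=
  if x < 0 then (1, 2, 5 / 7) else (1, -2, 5 / 7)

namespace EulerAux

lemma sqrt61_sq : Real.sqrt 61 * Real.sqrt 61 = 61 := Real.mul_self_sqrt (by norm_num)

lemma rhoStar_pos : (0 : ℝ) < rhoStar := by
  unfold rhoStar
  nlinarith [Real.sqrt_nonneg 61]

lemma shockSpeed_nonneg : (0 : ℝ) ≤ shockSpeed := by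
  have h4 : (4 : ℝ) ≤ Real.sqrt 61 := by
    nlinarith [sqrt61_sq, Real.sqrt_nonneg 61]
  unfold shockSpeed
  linarith

/-- Rankine–Hugoniot condition across the left shock (speed `-shockSpeed`). -/
lemma RH_left (j : Fin 3) :
    eulerFlux (1, 2, 5 / 7) j - eulerFlux (rhoStar, 0, pStar) j
      + shockSpeed * (conserved (1, 2, 5 / 7) j - conserved (rhoStar, 0, pStar) j) = 0 := by
  have hρ := rhoStar_pos.ne'
  fin_cases j <;>
    simp [eulerFlux, conserved, totalEnergy, eulerGamma, shockSpeed, rhoStar, pStar] <;>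
    field_simp <;> nlinarith [sqrt61_sq, Real.sqrt_nonneg 61]

/-- Rankine–Hugoniot condition across the right shock (speed `shockSpeed`). -/
lemma RH_right (j : Fin 3) :
    eulerFlux (rhoStar, 0, pStar) j - eulerFlux (1, -2, 5 / 7) j
      - shockSpeed * (conserved (rhoStar, 0, pStar) j - conserved (1, -2, 5 / 7) j) = 0 := by
  have hρ := rhoStar_pos.ne'
  fin_cases j <;>
    simp [eulerFlux, conserved, totalEnergy, eulerGamma, shockSpeed, rhoStar, pStar] <;>
    field_simp <;> nlinarith [sqrt61_sq, Real.sqrt_nonneg 61]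

end EulerAux

namespace EulerAux

open Set

variable {φ : ℝ × ℝ → ℝ}

/-- Splitting of the spatial integral of the piecewise-constant profile at a
fixed positive time. -/
lemma inner_split (h : ContDiff ℝ (⊤ : ℕ∞) φ) (hc : HasCompactSupport φ) (j : Fin 3)
    {t : ℝ} (ht : 0 < t) :
    (∫ x : ℝ, (conserved (impactSolution x t) j * fderiv ℝ φ (x, t) (0, 1)
        + eulerFlux (impactSolution x t) j * fderiv ℝ φ (x, t) (1, 0)))
      = (∫ x in Iio (-shockSpeed * t),
            (conserved (1, 2, 5 / 7) j * fderiv ℝ φ (x, t) (0, 1)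
              + eulerFlux (1, 2, 5 / 7) j * fderiv ℝ φ (x, t) (1, 0)))
        + ((∫ x in Iio (shockSpeed * t),
              (conserved (rhoStar, 0, pStar) j * fderiv ℝ φ (x, t) (0, 1)
                + eulerFlux (rhoStar, 0, pStar) j * fderiv ℝ φ (x, t) (1, 0)))
          - (∫ x in Iio (-shockSpeed * t),
              (conserved (rhoStar, 0, pStar) j * fderiv ℝ φ (x, t) (0, 1)
                + eulerFlux (rhoStar, 0, pStar) j * fderiv ℝ φ (x, t) (1, 0))))
        + ((∫ x : ℝ, (conserved (1, -2, 5 / 7) j * fderiv ℝ φ (x, t) (0, 1)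
              + eulerFlux (1, -2, 5 / 7) j * fderiv ℝ φ (x, t) (1, 0)))
          - (∫ x in Iio (shockSpeed * t),
              (conserved (1, -2, 5 / 7) j * fderiv ℝ φ (x, t) (0, 1)
                + eulerFlux (1, -2, 5 / 7) j * fderiv ℝ φ (x, t) (1, 0)))) := by
  have hsn := shockSpeed_nonneg
  have hnm : -shockSpeed * t = -(shockSpeed * t) := neg_mul _ _
  have hab : -shockSpeed * t ≤ shockSpeed * t := by
    rw [hnm]; nlinarith
  -- integrability of constant-state integrands
  have iG : ∀ w : ℝ × ℝ × ℝ, Integrable (fun x => conserved w j * fderiv ℝ φ (x, t) (0, 1)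
      + eulerFlux w j * fderiv ℝ φ (x, t) (1, 0)) volume := by
    intro w
    apply Continuous.integrable_of_hasCompactSupport
    · exact (continuous_const.mul ((contDeriv h ((0:ℝ), (1:ℝ))).comp
          (continuous_id.prodMk continuous_const))).add
        (continuous_const.mul ((contDeriv h ((1:ℝ), (0:ℝ))).comp
          (continuous_id.prodMk continuous_const)))
    · have h2 := (slice1_compact (compactDeriv hc h ((0:ℝ), (1:ℝ))) t).comp_left
        (g := fun r : ℝ => conserved w j * r) (mul_zero _)
      have h1 := (slice1_compact (compactDeriv hc h ((1:ℝ), (0:ℝ))) t).comp_left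
        (g := fun r : ℝ => eulerFlux w j * r) (mul_zero _)
      exact h2.add h1
  set g : ℝ → ℝ := fun x => conserved (impactSolution x t) j * fderiv ℝ φ (x, t) (0, 1)
      + eulerFlux (impactSolution x t) j * fderiv ℝ φ (x, t) (1, 0) with hg
  -- the profile on each region
  have eL : EqOn g (fun x => conserved (1, 2, 5 / 7) j * fderiv ℝ φ (x, t) (0, 1)
      + eulerFlux (1, 2, 5 / 7) j * fderiv ℝ φ (x, t) (1, 0)) (Iio (-shockSpeed * t)) := by
    intro x hx
    have hx' : x < -(shockSpeed * t) := by rw [← hnm]; exact hx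
    simp only [hg, impactSolution, if_pos hx']
  have eM : EqOn g (fun x => conserved (rhoStar, 0, pStar) j * fderiv ℝ φ (x, t) (0, 1)
      + eulerFlux (rhoStar, 0, pStar) j * fderiv ℝ φ (x, t) (1, 0))
      (Icc (-shockSpeed * t) (shockSpeed * t)) := by
    intro x hx
    have h1 : ¬ x < -(shockSpeed * t) := by rw [← hnm]; exact not_lt.mpr hx.1
    have h2 : x ≤ shockSpeed * t := hx.2
    simp only [hg, impactSolution, if_neg h1, if_pos h2]
  have eR : EqOn g (fun x => conserved (1, -2, 5 / 7) j * fderiv ℝ φ (x, t) (0, 1)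
      + eulerFlux (1, -2, 5 / 7) j * fderiv ℝ φ (x, t) (1, 0)) (Ioi (shockSpeed * t)) := by
    intro x hx
    have h1 : ¬ x < -(shockSpeed * t) := by
      rw [← hnm]; push_neg; linarith [mem_Ioi.mp hx]
    have h2 : ¬ x ≤ shockSpeed * t := not_le.mpr hx
    simp only [hg, impactSolution, if_neg h1, if_neg h2]
  -- integrability of g on the regions
  have igL : IntegrableOn g (Iio (-shockSpeed * t)) :=
    ((iG (1, 2, 5 / 7)).integrableOn).congr_fun eL.symm measurableSet_Iio
  have igM : IntegrableOn g (Icc (-shockSpeed * t) (shockSpeed * t)) :=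
    ((iG (rhoStar, 0, pStar)).integrableOn).congr_fun eM.symm measurableSet_Icc
  have igR : IntegrableOn g (Ioi (shockSpeed * t)) :=
    ((iG (1, -2, 5 / 7)).integrableOn).congr_fun eR.symm measurableSet_Ioi
  have igIci : IntegrableOn g (Ici (-shockSpeed * t)) := by
    rw [← Icc_union_Ioi_eq_Ici hab]
    exact igM.union igR
  have disj1 : Disjoint (Icc (-shockSpeed * t) (shockSpeed * t)) (Ioi (shockSpeed * t)) :=
    (Iic_disjoint_Ioi le_rfl).mono_left Icc_subset_Iic_self
  have disj2 : Disjoint (Iio (-shockSpeed * t)) (Icc (-shockSpeed * t) (shockSpeed * t)) :=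
    (Iio_disjoint_Ici le_rfl).mono_right Icc_subset_Ici_self
  have split1 : (∫ x : ℝ, g x) = (∫ x in Iio (-shockSpeed * t), g x)
      + ∫ x in Ici (-shockSpeed * t), g x :=
    (intervalIntegral.integral_Iio_add_Ici igL igIci).symm
  have split2 : (∫ x in Ici (-shockSpeed * t), g x)
      = (∫ x in Icc (-shockSpeed * t) (shockSpeed * t), g x) + ∫ x in Ioi (shockSpeed * t), g x := by
    rw [← Icc_union_Ioi_eq_Ici hab, setIntegral_union disj1 measurableSet_Ioi igM igR]
  have mid : (∫ x in Icc (-shockSpeed * t) (shockSpeed * t),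
        (conserved (rhoStar, 0, pStar) j * fderiv ℝ φ (x, t) (0, 1)
          + eulerFlux (rhoStar, 0, pStar) j * fderiv ℝ φ (x, t) (1, 0)))
      = (∫ x in Iio (shockSpeed * t),
          (conserved (rhoStar, 0, pStar) j * fderiv ℝ φ (x, t) (0, 1)
            + eulerFlux (rhoStar, 0, pStar) j * fderiv ℝ φ (x, t) (1, 0)))
        - ∫ x in Iio (-shockSpeed * t),
            (conserved (rhoStar, 0, pStar) j * fderiv ℝ φ (x, t) (0, 1)
              + eulerFlux (rhoStar, 0, pStar) j * fderiv ℝ φ (x, t) (1, 0)) := by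
    have hu : (∫ x in Iic (shockSpeed * t),
          (conserved (rhoStar, 0, pStar) j * fderiv ℝ φ (x, t) (0, 1)
            + eulerFlux (rhoStar, 0, pStar) j * fderiv ℝ φ (x, t) (1, 0)))
        = (∫ x in Iio (-shockSpeed * t),
            (conserved (rhoStar, 0, pStar) j * fderiv ℝ φ (x, t) (0, 1)
              + eulerFlux (rhoStar, 0, pStar) j * fderiv ℝ φ (x, t) (1, 0)))
          + ∫ x in Icc (-shockSpeed * t) (shockSpeed * t),
              (conserved (rhoStar, 0, pStar) j * fderiv ℝ φ (x, t) (0, 1)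
                + eulerFlux (rhoStar, 0, pStar) j * fderiv ℝ φ (x, t) (1, 0)) := by
      rw [← Iio_union_Icc_eq_Iic hab,
        setIntegral_union disj2 measurableSet_Icc
          (iG (rhoStar, 0, pStar)).integrableOn (iG (rhoStar, 0, pStar)).integrableOn]
    rw [integral_Iic_eq_integral_Iio] at hu
    linarith
  have rt : (∫ x in Ioi (shockSpeed * t),
        (conserved (1, -2, 5 / 7) j * fderiv ℝ φ (x, t) (0, 1)
          + eulerFlux (1, -2, 5 / 7) j * fderiv ℝ φ (x, t) (1, 0)))
      = (∫ x : ℝ, (conserved (1, -2, 5 / 7) j * fderiv ℝ φ (x, t) (0, 1)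
            + eulerFlux (1, -2, 5 / 7) j * fderiv ℝ φ (x, t) (1, 0)))
        - ∫ x in Iio (shockSpeed * t),
            (conserved (1, -2, 5 / 7) j * fderiv ℝ φ (x, t) (0, 1)
              + eulerFlux (1, -2, 5 / 7) j * fderiv ℝ φ (x, t) (1, 0)) := by
    have := intervalIntegral.integral_Iio_add_Ici (b := shockSpeed * t)
      (iG (1, -2, 5 / 7)).integrableOn (iG (1, -2, 5 / 7)).integrableOn
    rw [integral_Ici_eq_integral_Ioi] at this
    linarith
  calc (∫ x : ℝ, g x)
      = (∫ x in Iio (-shockSpeed * t), g x)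
        + ((∫ x in Icc (-shockSpeed * t) (shockSpeed * t), g x)
          + ∫ x in Ioi (shockSpeed * t), g x) := by rw [split1, split2]
    _ = _ := by
        rw [setIntegral_congr_fun measurableSet_Iio eL,
          setIntegral_congr_fun measurableSet_Icc eM,
          setIntegral_congr_fun measurableSet_Ioi eR, mid, rt]
        ring

/-- Splitting of the initial-data integral. -/
lemma init_split (h : ContDiff ℝ (⊤ : ℕ∞) φ) (hc : HasCompactSupport φ) (j : Fin 3) :
    (∫ x : ℝ, conserved (impactInitial x) j * φ (x, 0))
      = conserved (1, 2, 5 / 7) j * (∫ x in Iio (0 : ℝ), φ (x, 0))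
        + conserved (1, -2, 5 / 7) j
            * ((∫ x : ℝ, φ (x, 0)) - ∫ x in Iio (0 : ℝ), φ (x, 0)) := by
  have iφ0 : Integrable (fun x : ℝ => φ (x, 0)) volume :=
    ((h.continuous.comp (continuous_id.prodMk continuous_const)
      ).integrable_of_hasCompactSupport (slice1_compact hc 0))
  have eL : EqOn (fun x => conserved (impactInitial x) j * φ (x, 0))
      (fun x => conserved (1, 2, 5 / 7) j * φ (x, 0)) (Iio (0 : ℝ)) := by
    intro x hx
    simp only [impactInitial, if_pos (mem_Iio.mp hx)]
  have eR : EqOn (fun x => conserved (impactInitial x) j * φ (x, 0))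
      (fun x => conserved (1, -2, 5 / 7) j * φ (x, 0)) (Ici (0 : ℝ)) := by
    intro x hx
    simp only [impactInitial, if_neg (not_lt.mpr (mem_Ici.mp hx))]
  have i1 : IntegrableOn (fun x => conserved (impactInitial x) j * φ (x, 0)) (Iio (0 : ℝ)) :=
    ((iφ0.const_mul _).integrableOn).congr_fun eL.symm measurableSet_Iio
  have i2 : IntegrableOn (fun x => conserved (impactInitial x) j * φ (x, 0)) (Ici (0 : ℝ)) :=
    ((iφ0.const_mul _).integrableOn).congr_fun eR.symm measurableSet_Ici
  have hIci : (∫ x in Ici (0 : ℝ), φ (x, 0)) = (∫ x : ℝ, φ (x, 0)) - ∫ x in Iio (0 : ℝ), φ (x, 0) := by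
    have := intervalIntegral.integral_Iio_add_Ici (b := (0 : ℝ))
      iφ0.integrableOn iφ0.integrableOn
    linarith
  rw [← intervalIntegral.integral_Iio_add_Ici i1 i2,
    setIntegral_congr_fun measurableSet_Iio eL,
    setIntegral_congr_fun measurableSet_Ici eR,
    integral_const_mul _ _, integral_const_mul _ _, hIci]

end EulerAux

/-- The piecewise-constant two-shock profile of the impact problem is a weak
solution of the one-dimensional Euler equations: for every smooth compactly
supported test function `φ : ℝ × ℝ → ℝ` and every component `j`,
`∫₀^∞ ∫_ℝ (U_j ∂_t φ + F_j(U) ∂_x φ) dx dt + ∫_ℝ U_j(x,0) φ(x,0) dx = 0`. -/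
theorem impact_two_shock_weak_solution
    (φ : ℝ × ℝ → ℝ) (hφ : ContDiff ℝ (⊤ : ℕ∞) φ) (hφc : HasCompactSupport φ)
    (j : Fin 3) :
    (∫ t in Set.Ioi (0 : ℝ), ∫ x : ℝ,
        (conserved (impactSolution x t) j
            * deriv (fun τ : ℝ => φ (x, τ)) t
          + eulerFlux (impactSolution x t) j
            * deriv (fun ξ : ℝ => φ (ξ, t)) x))
      + (∫ x : ℝ, conserved (impactInitial x) j * φ (x, 0)) = 0 := by
  open EulerAux Set in
  have hdt : ∀ x t : ℝ, deriv (fun τ : ℝ => φ (x, τ)) t = fderiv ℝ φ (x, t) (0, 1) :=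
    fun x t => (hasDerivAt_slice2 hφ x t).deriv
  have hdx : ∀ x t : ℝ, deriv (fun ξ : ℝ => φ (ξ, t)) x = fderiv ℝ φ (x, t) (1, 0) :=
    fun x t => (hasDerivAt_slice1 hφ x t).deriv
  simp only [hdt, hdx]
  -- replace the inner integral by its decomposition into constant-state pieces
  have key : (∫ t in Ioi (0 : ℝ), ∫ x : ℝ,
        (conserved (impactSolution x t) j * fderiv ℝ φ (x, t) (0, 1)
          + eulerFlux (impactSolution x t) j * fderiv ℝ φ (x, t) (1, 0)))
      = ∫ t in Ioi (0 : ℝ),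
          ((∫ x in Iio (-shockSpeed * t),
              (conserved (1, 2, 5 / 7) j * fderiv ℝ φ (x, t) (0, 1)
                + eulerFlux (1, 2, 5 / 7) j * fderiv ℝ φ (x, t) (1, 0)))
          + ((∫ x in Iio (shockSpeed * t),
                (conserved (rhoStar, 0, pStar) j * fderiv ℝ φ (x, t) (0, 1)
                  + eulerFlux (rhoStar, 0, pStar) j * fderiv ℝ φ (x, t) (1, 0)))
            - (∫ x in Iio (-shockSpeed * t),
                (conserved (rhoStar, 0, pStar) j * fderiv ℝ φ (x, t) (0, 1)
                  + eulerFlux (rhoStar, 0, pStar) j * fderiv ℝ φ (x, t) (1, 0))))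
          + ((∫ x : ℝ, (conserved (1, -2, 5 / 7) j * fderiv ℝ φ (x, t) (0, 1)
                + eulerFlux (1, -2, 5 / 7) j * fderiv ℝ φ (x, t) (1, 0)))
            - (∫ x in Iio (shockSpeed * t),
                (conserved (1, -2, 5 / 7) j * fderiv ℝ φ (x, t) (0, 1)
                  + eulerFlux (1, -2, 5 / 7) j * fderiv ℝ φ (x, t) (1, 0))))) :=
    setIntegral_congr_fun measurableSet_Ioi (fun t ht => inner_split hφ hφc j ht)
  rw [key]
  -- integrability of the five pieces
  have iA := wedgeFun_integrable hφ hφc (conserved (1, 2, 5 / 7) j)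
    (eulerFlux (1, 2, 5 / 7) j) (-shockSpeed)
  have iB := wedgeFun_integrable hφ hφc (conserved (rhoStar, 0, pStar) j)
    (eulerFlux (rhoStar, 0, pStar) j) shockSpeed
  have iC := wedgeFun_integrable hφ hφc (conserved (rhoStar, 0, pStar) j)
    (eulerFlux (rhoStar, 0, pStar) j) (-shockSpeed)
  have iD := planeFun_integrable hφ hφc (conserved (1, -2, 5 / 7) j)
    (eulerFlux (1, -2, 5 / 7) j)
  have iE := wedgeFun_integrable hφ hφc (conserved (1, -2, 5 / 7) j)
    (eulerFlux (1, -2, 5 / 7) j) shockSpeed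
  have hBC : (∫ t in Ioi (0 : ℝ), ((∫ x in Iio (shockSpeed * t),
        (conserved (rhoStar, 0, pStar) j * fderiv ℝ φ (x, t) (0, 1)
          + eulerFlux (rhoStar, 0, pStar) j * fderiv ℝ φ (x, t) (1, 0))) - (∫ x in Iio (-shockSpeed * t),
        (conserved (rhoStar, 0, pStar) j * fderiv ℝ φ (x, t) (0, 1)
          + eulerFlux (rhoStar, 0, pStar) j * fderiv ℝ φ (x, t) (1, 0)))))
      = (∫ t in Ioi (0 : ℝ), (∫ x in Iio (shockSpeed * t),
        (conserved (rhoStar, 0, pStar) j * fderiv ℝ φ (x, t) (0, 1)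
          + eulerFlux (rhoStar, 0, pStar) j * fderiv ℝ φ (x, t) (1, 0)))) - (∫ t in Ioi (0 : ℝ), (∫ x in Iio (-shockSpeed * t),
        (conserved (rhoStar, 0, pStar) j * fderiv ℝ φ (x, t) (0, 1)
          + eulerFlux (rhoStar, 0, pStar) j * fderiv ℝ φ (x, t) (1, 0)))) :=
    MeasureTheory.integral_sub iB iC
  have hDE : (∫ t in Ioi (0 : ℝ), ((∫ x : ℝ, (conserved (1, -2, 5 / 7) j * fderiv ℝ φ (x, t) (0, 1)
          + eulerFlux (1, -2, 5 / 7) j * fderiv ℝ φ (x, t) (1, 0))) - (∫ x in Iio (shockSpeed * t),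
        (conserved (1, -2, 5 / 7) j * fderiv ℝ φ (x, t) (0, 1)
          + eulerFlux (1, -2, 5 / 7) j * fderiv ℝ φ (x, t) (1, 0)))))
      = (∫ t in Ioi (0 : ℝ), (∫ x : ℝ, (conserved (1, -2, 5 / 7) j * fderiv ℝ φ (x, t) (0, 1)
          + eulerFlux (1, -2, 5 / 7) j * fderiv ℝ φ (x, t) (1, 0)))) - (∫ t in Ioi (0 : ℝ), (∫ x in Iio (shockSpeed * t),
        (conserved (1, -2, 5 / 7) j * fderiv ℝ φ (x, t) (0, 1)
          + eulerFlux (1, -2, 5 / 7) j * fderiv ℝ φ (x, t) (1, 0)))) :=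
    MeasureTheory.integral_sub iD iE
  have hABC : (∫ t in Ioi (0 : ℝ), ((∫ x in Iio (-shockSpeed * t),
        (conserved (1, 2, 5 / 7) j * fderiv ℝ φ (x, t) (0, 1)
          + eulerFlux (1, 2, 5 / 7) j * fderiv ℝ φ (x, t) (1, 0))) + ((∫ x in Iio (shockSpeed * t),
        (conserved (rhoStar, 0, pStar) j * fderiv ℝ φ (x, t) (0, 1)
          + eulerFlux (rhoStar, 0, pStar) j * fderiv ℝ φ (x, t) (1, 0))) - (∫ x in Iio (-shockSpeed * t),
        (conserved (rhoStar, 0, pStar) j * fderiv ℝ φ (x, t) (0, 1)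
          + eulerFlux (rhoStar, 0, pStar) j * fderiv ℝ φ (x, t) (1, 0))))))
      = (∫ t in Ioi (0 : ℝ), (∫ x in Iio (-shockSpeed * t),
        (conserved (1, 2, 5 / 7) j * fderiv ℝ φ (x, t) (0, 1)
          + eulerFlux (1, 2, 5 / 7) j * fderiv ℝ φ (x, t) (1, 0)))) + (∫ t in Ioi (0 : ℝ), ((∫ x in Iio (shockSpeed * t),
        (conserved (rhoStar, 0, pStar) j * fderiv ℝ φ (x, t) (0, 1)
          + eulerFlux (rhoStar, 0, pStar) j * fderiv ℝ φ (x, t) (1, 0))) - (∫ x in Iio (-shockSpeed * t),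
        (conserved (rhoStar, 0, pStar) j * fderiv ℝ φ (x, t) (0, 1)
          + eulerFlux (rhoStar, 0, pStar) j * fderiv ℝ φ (x, t) (1, 0))))) :=
    MeasureTheory.integral_add iA (iB.sub iC)
  have hAll : (∫ t in Ioi (0 : ℝ), ((∫ x in Iio (-shockSpeed * t),
        (conserved (1, 2, 5 / 7) j * fderiv ℝ φ (x, t) (0, 1)
          + eulerFlux (1, 2, 5 / 7) j * fderiv ℝ φ (x, t) (1, 0))) + ((∫ x in Iio (shockSpeed * t),
        (conserved (rhoStar, 0, pStar) j * fderiv ℝ φ (x, t) (0, 1)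
          + eulerFlux (rhoStar, 0, pStar) j * fderiv ℝ φ (x, t) (1, 0))) - (∫ x in Iio (-shockSpeed * t),
        (conserved (rhoStar, 0, pStar) j * fderiv ℝ φ (x, t) (0, 1)
          + eulerFlux (rhoStar, 0, pStar) j * fderiv ℝ φ (x, t) (1, 0)))) + ((∫ x : ℝ, (conserved (1, -2, 5 / 7) j * fderiv ℝ φ (x, t) (0, 1)
          + eulerFlux (1, -2, 5 / 7) j * fderiv ℝ φ (x, t) (1, 0))) - (∫ x in Iio (shockSpeed * t),
        (conserved (1, -2, 5 / 7) j * fderiv ℝ φ (x, t) (0, 1)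
          + eulerFlux (1, -2, 5 / 7) j * fderiv ℝ φ (x, t) (1, 0))))))
      = (∫ t in Ioi (0 : ℝ), ((∫ x in Iio (-shockSpeed * t),
        (conserved (1, 2, 5 / 7) j * fderiv ℝ φ (x, t) (0, 1)
          + eulerFlux (1, 2, 5 / 7) j * fderiv ℝ φ (x, t) (1, 0))) + ((∫ x in Iio (shockSpeed * t),
        (conserved (rhoStar, 0, pStar) j * fderiv ℝ φ (x, t) (0, 1)
          + eulerFlux (rhoStar, 0, pStar) j * fderiv ℝ φ (x, t) (1, 0))) - (∫ x in Iio (-shockSpeed * t),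
        (conserved (rhoStar, 0, pStar) j * fderiv ℝ φ (x, t) (0, 1)
          + eulerFlux (rhoStar, 0, pStar) j * fderiv ℝ φ (x, t) (1, 0)))))) + (∫ t in Ioi (0 : ℝ), ((∫ x : ℝ, (conserved (1, -2, 5 / 7) j * fderiv ℝ φ (x, t) (0, 1)
          + eulerFlux (1, -2, 5 / 7) j * fderiv ℝ φ (x, t) (1, 0))) - (∫ x in Iio (shockSpeed * t),
        (conserved (1, -2, 5 / 7) j * fderiv ℝ φ (x, t) (0, 1)
          + eulerFlux (1, -2, 5 / 7) j * fderiv ℝ φ (x, t) (1, 0))))) :=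
    MeasureTheory.integral_add (iA.add (iB.sub iC)) (iD.sub iE)
  rw [hAll, hABC, hBC, hDE]
  rw [wedge hφ hφc (conserved (1, 2, 5 / 7) j) (eulerFlux (1, 2, 5 / 7) j) (-shockSpeed),
    wedge hφ hφc (conserved (rhoStar, 0, pStar) j) (eulerFlux (rhoStar, 0, pStar) j) shockSpeed,
    wedge hφ hφc (conserved (rhoStar, 0, pStar) j) (eulerFlux (rhoStar, 0, pStar) j) (-shockSpeed),
    plane hφ hφc (conserved (1, -2, 5 / 7) j) (eulerFlux (1, -2, 5 / 7) j),
    wedge hφ hφc (conserved (1, -2, 5 / 7) j) (eulerFlux (1, -2, 5 / 7) j) shockSpeed,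
    init_split hφ hφc j]
  have RH1 := RH_left j
  have RH2 := RH_right j
  linear_combination (∫ t in Ioi (0 : ℝ), φ (-shockSpeed * t, t)) * RH1
    + (∫ t in Ioi (0 : ℝ), φ (shockSpeed * t, t)) * RH2
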